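/- Let f : ℕ → ℝ be monotonically increasing and positive, h ∈ ℤ, M a positive integer with 1 ≤ M ≤ N. Then |∑_{n=1}^N e(h/f(n))| ≥ (N − M) − 2π|h|·(N − M)/f(M) − M. -/

import Mathlib

open Finset

noncomputable def e (x : ℝ) : ℂ := Complex.exp (2 * Real.pi * Complex.I * x)

lemma abs_exp_I_sub_one_le (θ : ℝ) :
    ‖Complex.exp ((θ : ℂ) * Complex.I) - 1‖ ≤ |θ| := by
  rw [Complex.exp_mul_I]
  have h1 : Complex.cos θ + Complex.sin θ * Complex.I - 1
      = ((Real.cos θ - 1 : ℝ) : ℂ) + ((Real.sin θ : ℝ) : ℂ) * Complex.I := by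
    push_cast [← Complex.ofReal_cos, ← Complex.ofReal_sin]
    ring
  rw [h1, Complex.norm_add_mul_I]
  have h2 : (Real.cos θ - 1) ^ 2 + Real.sin θ ^ 2 = 4 * ((1 - Real.cos θ) / 2) := by
    have := Real.sin_sq_add_cos_sq θ
    nlinarith
  rw [h2, show (4 : ℝ) = 2 ^ 2 by norm_num, Real.sqrt_mul (by positivity),
    Real.sqrt_sq (by norm_num : (0:ℝ) ≤ 2), ← Real.abs_sin_half]
  calc 2 * |Real.sin (θ / 2)| ≤ 2 * |θ / 2| := by
        have := Real.abs_sin_le_abs (x := θ / 2); linarith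
    _ = |θ| := by rw [abs_div]; norm_num; ring

lemma abs_e_sub_one_le (t : ℝ) : ‖e t - 1‖ ≤ 2 * Real.pi * |t| := by
  have h1 : e t = Complex.exp (((2 * Real.pi * t : ℝ) : ℂ) * Complex.I) := by
    simp only [e]; push_cast; ring_nf
  rw [h1]
  calc ‖Complex.exp (((2 * Real.pi * t : ℝ) : ℂ) * Complex.I) - 1‖
      ≤ |2 * Real.pi * t| := abs_exp_I_sub_one_le _
    _ = 2 * Real.pi * |t| := by
        rw [abs_mul, abs_of_pos (by positivity : (0:ℝ) < 2 * Real.pi)]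

theorem stmt_11 (f : ℕ → ℝ) (hpos : ∀ n, 1 ≤ n → 0 < f n)
    (hmono : ∀ m n, 1 ≤ m → m ≤ n → f m ≤ f n)
    (h : ℤ) (M N : ℕ) (hM : 1 ≤ M) (hMN : M ≤ N) :
    ((N : ℝ) - M) - 2 * Real.pi * |(h : ℝ)| * ((N : ℝ) - M) / f M - M
      ≤ ‖∑ n ∈ Finset.Icc 1 N, e ((h : ℝ) / f n)‖ := by
  have hfM : 0 < f M := hpos M hM
  -- split the sum
  have hsplit : Finset.Icc 1 N = Finset.Icc 1 M ∪ Finset.Icc (M+1) N := by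
    ext x; simp only [Finset.mem_Icc, Finset.mem_union]; omega
  have hdisj : Disjoint (Finset.Icc 1 M) (Finset.Icc (M+1) N) := by
    simp only [Finset.disjoint_left, Finset.mem_Icc]; omega
  set S1 := ∑ n ∈ Finset.Icc 1 M, e ((h : ℝ) / f n) with hS1
  set S2 := ∑ n ∈ Finset.Icc (M+1) N, e ((h : ℝ) / f n) with hS2
  have hsum : ∑ n ∈ Finset.Icc 1 N, e ((h : ℝ) / f n) = S1 + S2 := by
    rw [hsplit, Finset.sum_union hdisj]
  have habse : ∀ t : ℝ, ‖e t‖ = 1 := by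
    intro t
    simp [e, Complex.norm_exp]
  have habs1 : ‖S1‖ ≤ M := by
    calc ‖S1‖ ≤ ∑ n ∈ Finset.Icc 1 M, ‖e ((h : ℝ) / f n)‖ :=
          norm_sum_le _ _
      _ = ∑ n ∈ Finset.Icc 1 M, (1 : ℝ) := by
          exact Finset.sum_congr rfl fun n _ => habse _
      _ = M := by simp [Nat.card_Icc]
  have hcard : (Finset.Icc (M+1) N).card = N - M := by
    rw [Nat.card_Icc]; omega
  have hterm : ∀ n ∈ Finset.Icc (M+1) N,
      ‖1 - e ((h : ℝ) / f n)‖ ≤ 2 * Real.pi * |(h : ℝ)| / f M := by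
    intro n hn
    rw [Finset.mem_Icc] at hn
    have hn1 : 1 ≤ n := by omega
    have hfn : 0 < f n := hpos n hn1
    have hfMn : f M ≤ f n := hmono M n hM (by omega)
    calc ‖1 - e ((h : ℝ) / f n)‖
        = ‖e ((h : ℝ) / f n) - 1‖ := norm_sub_rev _ _
      _ ≤ 2 * Real.pi * |(h : ℝ) / f n| := abs_e_sub_one_le _
      _ = 2 * Real.pi * (|(h : ℝ)| / f n) := by
          rw [abs_div, abs_of_pos hfn]
      _ ≤ 2 * Real.pi * (|(h : ℝ)| / f M) := by
          gcongr
      _ = 2 * Real.pi * |(h : ℝ)| / f M := by ring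
  have hEq : (Complex.ofReal ((N : ℝ) - M)) - S2 = ∑ n ∈ Finset.Icc (M+1) N, (1 - e ((h : ℝ) / f n)) := by
    have h3 : ∑ n ∈ Finset.Icc (M+1) N, ((1:ℂ) - e ((h : ℝ) / f n))
        = ((Finset.Icc (M+1) N).card : ℂ) - S2 := by
      rw [Finset.sum_sub_distrib, Finset.sum_const, nsmul_eq_mul, mul_one, hS2]
    rw [h3, hcard, Nat.cast_sub hMN]
    push_cast
    ring
  have habsE : ‖(Complex.ofReal ((N : ℝ) - M)) - S2‖
      ≤ ((N : ℝ) - M) * (2 * Real.pi * |(h : ℝ)| / f M) := by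
    rw [hEq]
    calc ‖∑ n ∈ Finset.Icc (M+1) N, (1 - e ((h : ℝ) / f n))‖
        ≤ ∑ n ∈ Finset.Icc (M+1) N, ‖1 - e ((h : ℝ) / f n)‖ :=
          norm_sum_le _ _
      _ ≤ ∑ _n ∈ Finset.Icc (M+1) N, (2 * Real.pi * |(h : ℝ)| / f M) :=
          Finset.sum_le_sum hterm
      _ = ((N : ℝ) - M) * (2 * Real.pi * |(h : ℝ)| / f M) := by
          rw [Finset.sum_const, hcard, nsmul_eq_mul]
          congr 1
          push_cast [Nat.cast_sub hMN]
          ring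
  have habs2 : ((N : ℝ) - M) - ((N : ℝ) - M) * (2 * Real.pi * |(h : ℝ)| / f M)
      ≤ ‖S2‖ := by
    have h1 : ‖Complex.ofReal ((N : ℝ) - M)‖ - ‖(Complex.ofReal ((N : ℝ) - M)) - S2‖
        ≤ ‖S2‖ := by
      have h4 := norm_sub_norm_le (Complex.ofReal ((N : ℝ) - M)) ((Complex.ofReal ((N : ℝ) - M)) - S2)
      rw [sub_sub_cancel] at h4
      exact h4
    have h2 : ‖Complex.ofReal ((N : ℝ) - M)‖ = (N : ℝ) - M := by
      rw [Complex.norm_real, Real.norm_eq_abs, abs_of_nonneg]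
      have : (M : ℝ) ≤ N := by exact_mod_cast hMN
      linarith
    linarith
  have hfinal : ‖S2‖ - ‖S1‖ ≤ ‖S1 + S2‖ := by
    have h5 := norm_sub_norm_le S2 (-S1)
    rw [sub_neg_eq_add, norm_neg, add_comm] at h5
    exact h5
  rw [hsum]
  have heq2 : 2 * Real.pi * |(h : ℝ)| * ((N : ℝ) - M) / f M
      = ((N : ℝ) - M) * (2 * Real.pi * |(h : ℝ)| / f M) := by
    field_simp
  rw [heq2]
  linarith
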